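/- arXiv:1911.00092 — 4 statements merged into one kernel-verified Lean document; each statement's English description precedes it below -/
import Mathlib

section
/- (Comparison between boundary conditions for h.) Let D be a finite subset of ℤ², B ⊆ D, and let (B,κ) and (B,κ′) be admissible boundary conditions such that for every v ∈ B, κ_v = [a_v,b_v] ∩ ℤ and κ′_v = [a′_v,b′_v] ∩ ℤ are (possibly unbounded) integer intervals with a_v ≤ a′_v and b_v ≤ b′_v. Then for every increasing function F : ℤ^D → ℝ, φ_D^{B,κ′}[F(h)] ≥ φ_D^{B,κ}[F(h)]. -/
open scoped BigOperators

namespace SquareIce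

/-- Vertices of the square lattice `ℤ²`. -/
abbrev V : Type := ℤ × ℤ

/-- Nearest-neighbour adjacency: Euclidean distance 1. -/
def adj (u v : V) : Prop := (u.1 - v.1).natAbs + (u.2 - v.2).natAbs = 1

/-- Diagonal (`×`) adjacency: Euclidean distance `√2`. -/
def xadj (u v : V) : Prop := (u.1 - v.1).natAbs = 1 ∧ (u.2 - v.2).natAbs = 1

/-- `*`-adjacency: graph distance exactly 2 in `ℤ²`. -/
def starAdj (u v : V) : Prop := (u.1 - v.1).natAbs + (u.2 - v.2).natAbs = 2

/-- A vertex is even when the sum of its coordinates is even. -/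
def IsEvenV (v : V) : Prop := Even (v.1 + v.2)

/-- Squared Euclidean distance between two vertices. -/
def distSq (u v : V) : ℤ := (u.1 - v.1) ^ 2 + (u.2 - v.2) ^ 2

/-- Sup-norm of a vertex. -/
def infNorm (v : V) : ℤ := max |v.1| |v.2|

/-- `h` is a height function on `D` (normalised to vanish outside `D`):
increments of absolute value one along edges of `D`, and even values on even
vertices (equivalently, `h v` has the parity of `v.1 + v.2`). -/
def IsHeightFn (D : Set V) (h : V → ℤ) : Prop :=
  (∀ u v, u ∈ D → v ∈ D → adj u v → |h u - h v| = 1) ∧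
  (∀ v ∈ D, Even (h v + v.1 + v.2)) ∧ (∀ v, v ∉ D → h v = 0)

/-- Boundary of `D`: vertices of `D` with a nearest neighbour outside `D`. -/
def bdry (D : Set V) : Set V := {v | v ∈ D ∧ ∃ u, u ∉ D ∧ adj u v}

/-- `A` and `B` are joined by a `rel`-path all of whose vertices lie in `S`. -/
def Connected (rel : V → V → Prop) (S A B : Set V) : Prop :=
  ∃ p : List V, ∃ hp : p ≠ [], List.Chain' rel p ∧ (∀ v ∈ p, v ∈ S) ∧
    p.head hp ∈ A ∧ p.getLast hp ∈ B

/-- `S` is the vertex set of a closed `×`-path. -/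
def IsXCircuit (S : Set V) : Prop :=
  ∃ p : List V, ∃ hp : p ≠ [], List.Chain' xadj p ∧ p.head hp = p.getLast hp ∧
    {v | v ∈ p} = S

/-- A domain: a finite set whose boundary is a `×`-circuit. -/
def IsDomain (D : Set V) : Prop := D.Finite ∧ IsXCircuit (bdry D)

/-- An even domain: a domain whose boundary consists of even vertices. -/
def IsEvenDomain (D : Set V) : Prop := IsDomain D ∧ ∀ v ∈ bdry D, IsEvenV v

/-- Height functions on `D` whose value at every `v ∈ B` lies in `κ v`. -/
def HomSet (D B : Set V) (κ : V → Set ℤ) : Set (V → ℤ) :=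
  {h | IsHeightFn D h ∧ ∀ v ∈ B, h v ∈ κ v}

/-- Height functions on `D` with prescribed boundary values `κ` on `∂D`. -/
def HomBC (D : Set V) (κ : V → ℤ) : Set (V → ℤ) :=
  {h | IsHeightFn D h ∧ ∀ v ∈ bdry D, h v = κ v}

/-- Height functions on `D` vanishing on `∂D`. -/
def Hom0 (D : Set V) : Set (V → ℤ) := HomBC D (fun _ => 0)

/-- Probability of `A` under the uniform measure on the finite set `S`. -/
noncomputable def pr {α : Type*} (S A : Set α) : ℝ :=
  (Nat.card (S ∩ A : Set α) : ℝ) / (Nat.card S : ℝ)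

/-- Expectation of `f` under the uniform measure on the finite set `S`. -/
noncomputable def expec {α : Type*} (S : Set α) (f : α → ℝ) : ℝ :=
  (∑ᶠ x ∈ S, f x) / (Nat.card S : ℝ)

/-- The box `Λ_{a,b} = ([-a,a] × [-b,b]) ∩ ℤ²`. -/
def Lam2 (a b : ℤ) : Set V := {v | |v.1| ≤ a ∧ |v.2| ≤ b}

/-- The box `Λ_a`. -/
def Lam (a : ℤ) : Set V := Lam2 a a

def leftSide (a b : ℤ) : Set V := {v | v.1 = -a ∧ |v.2| ≤ b}
def rightSide (a b : ℤ) : Set V := {v | v.1 = a ∧ |v.2| ≤ b}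
def topSide (a b : ℤ) : Set V := {v | |v.1| ≤ a ∧ v.2 = b}
def botSide (a b : ℤ) : Set V := {v | |v.1| ≤ a ∧ v.2 = -b}

/-- Horizontal crossing of `Λ_{a,b}` by a `rel`-path of vertices satisfying `P`. -/
def HCross (rel : V → V → Prop) (a b : ℤ) (P : V → Prop) : Prop :=
  Connected rel {v | v ∈ Lam2 a b ∧ P v} (leftSide a b) (rightSide a b)

/-- Vertical crossing of `Λ_{a,b}` by a `rel`-path of vertices satisfying `P`. -/
def VCross (rel : V → V → Prop) (a b : ℤ) (P : V → Prop) : Prop :=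
  Connected rel {v | v ∈ Lam2 a b ∧ P v} (topSide a b) (botSide a b)

/-- `F` is increasing with respect to the pointwise order on `D`. -/
def IncreasingOn (D : Set V) (F : (V → ℤ) → ℝ) : Prop :=
  ∀ h h' : V → ℤ, (∀ v ∈ D, h v ≤ h' v) → F h ≤ F h'

/-- The even box `Λ_m^even`: everything inside or on the even `×`-circuit
surrounding the origin contained in `Λ_{m+1} ∖ Λ_{m-1}`. -/
def LamEven (m : ℤ) : Set V := Lam m ∪ {v | infNorm v = m + 1 ∧ IsEvenV v}

/-- A quad: a domain `D` together with an enumeration `p` of its boundary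
`×`-circuit (closed: first vertex repeated at the end) and marked points
`a = p[0]`, `b = p[ib]`, `c = p[ic]`, `d = p[idx]` in cyclic order. -/
structure Quad where
  D : Set V
  p : List V
  hp : p ≠ []
  hchain : List.Chain' xadj p
  hclosed : p.head hp = p.getLast hp
  hbd : {v | v ∈ p} = bdry D
  hfin : D.Finite
  ib : ℕ
  ic : ℕ
  idx : ℕ
  h0b : 0 < ib
  hbc : ib < ic
  hcd : ic < idx
  hdlen : idx + 1 < p.length

namespace Quad

def ptA (q : Quad) : V := q.p.head q.hp
def ptB (q : Quad) : V := q.p.getD q.ib ((0 : ℤ), (0 : ℤ))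
def ptC (q : Quad) : V := q.p.getD q.ic ((0 : ℤ), (0 : ℤ))
def ptD (q : Quad) : V := q.p.getD q.idx ((0 : ℤ), (0 : ℤ))

/-- The (closed) arc `[ab]` of the boundary of a quad. -/
def arcAB (q : Quad) : Set V := {v | v ∈ q.p.take (q.ib + 1)}

/-- The (closed) arc `[bc]` of the boundary of a quad. -/
def arcBC (q : Quad) : Set V := {v | v ∈ (q.p.drop q.ib).take (q.ic - q.ib + 1)}

/-- The (closed) arc `[cd]` of the boundary of a quad. -/
def arcCD (q : Quad) : Set V := {v | v ∈ (q.p.drop q.ic).take (q.idx - q.ic + 1)}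

/-- The (closed) arc `[da]` of the boundary of a quad. -/
def arcDA (q : Quad) : Set V := {v | v ∈ q.p.drop q.idx}

/-- The open arc `(bc)` (excluding the endpoints `b` and `c`). -/
def openBC (q : Quad) : Set V :=
  {v | v ∈ (((q.p.drop q.ib).take (q.ic - q.ib + 1)).drop 1).dropLast}

/-- The open arc `(da)` (excluding the endpoints `d` and `a`). -/
def openDA (q : Quad) : Set V := {v | v ∈ ((q.p.drop q.idx).drop 1).dropLast}

end Quad

/-! The two uniform measures are coupled through an involution of
`HomSet D B κ ×ˢ HomSet D B κ'`: given `(h, h')`, exchange `h` and `h'` on every cluster of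
disagreeing adjacent vertices on whose constrained vertices `max h h' ∈ κ` and `min h h' ∈ κ'`.
This rule is symmetric in the pair, and exchanging on whole clusters preserves the height function
property. Since `h` and `h'` have the same parity, `h - h'` keeps its sign on a cluster, so every
cluster on which `h > h'` is exchanged and the second coordinate of the image dominates `h`.
Interval constraints with `a ≤ a'`, `b ≤ b'` satisfy `min x y ∈ κ v` and `max x y ∈ κ' v` for
`x ∈ κ v`, `y ∈ κ' v`, which keeps the image in the product; summing `F` over the product gives
the inequality. -/

lemma expec_le_expec_of_involution {α : Type*} {A A' : Set α} (hA : A.Finite) (hA' : A'.Finite)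
    (hne : A.Nonempty) (hne' : A'.Nonempty) (F : α → ℝ) (σ : α × α → α × α)
    (hσ : ∀ p ∈ A ×ˢ A', σ p ∈ A ×ˢ A') (hσσ : ∀ p, σ (σ p) = p)
    (hF : ∀ p ∈ A ×ˢ A', F p.1 ≤ F (σ p).2) :
    expec A F ≤ expec A' F := by
  lift A to Finset α using hA
  lift A' to Finset α using hA'
  simp only [← Finset.coe_product, Finset.mem_coe] at hσ hF
  have hsum : ∑ p ∈ A ×ˢ A', F (σ p).2 = ∑ p ∈ A ×ˢ A', F p.2 :=
    Finset.sum_nbij' σ σ hσ hσ (fun p _ => hσσ p) (fun p _ => hσσ p) (fun _ _ => rfl)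
  have hcoupled : (∑ x ∈ A, F x) * A'.card ≤ (∑ y ∈ A', F y) * A.card :=
    calc (∑ x ∈ A, F x) * A'.card = ∑ p ∈ A ×ˢ A', F p.1 := by
          simp [Finset.sum_product, Finset.sum_mul, mul_comm]
      _ ≤ ∑ p ∈ A ×ˢ A', F (σ p).2 := Finset.sum_le_sum hF
      _ = (∑ y ∈ A', F y) * A.card := by
          simp [hsum, Finset.sum_product, Finset.sum_const, mul_comm]
  unfold expec
  rw [finsum_mem_coe_finset, finsum_mem_coe_finset, Nat.card_coe_set_eq, Nat.card_coe_set_eq,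
    Set.ncard_coe_finset, Set.ncard_coe_finset,
    div_le_div_iff₀ (by simpa using hne) (by simpa using hne')]
  exact hcoupled

lemma min_max_mem_of_le {α β : Type*} [LinearOrder α] [LinearOrder β] {f : α → β}
    (hf : Monotone f) {a b a' b' : β} (ha : a ≤ a') (hb : b ≤ b') {x y : α}
    (hx : a ≤ f x ∧ f x ≤ b) (hy : a' ≤ f y ∧ f y ≤ b') :
    (a ≤ f (min x y) ∧ f (min x y) ≤ b) ∧ (a' ≤ f (max x y) ∧ f (max x y) ≤ b') := by
  rw [hf.map_min, hf.map_max]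
  exact ⟨⟨le_min hx.1 (ha.trans hy.1), min_le_of_left_le hx.2⟩,
    ⟨le_max_of_le_right hy.1, max_le (hx.2.trans hb) hy.2⟩⟩

lemma adj_comm {u v : V} : adj u v ↔ adj v u := by
  unfold adj; omega

def DisagreeAdj (h h' : V → ℤ) (u v : V) : Prop := adj u v ∧ h u ≠ h' u ∧ h v ≠ h' v

lemma DisagreeAdj.symm {h h' : V → ℤ} {u v : V} (e : DisagreeAdj h h' u v) :
    DisagreeAdj h h' v u :=
  ⟨adj_comm.mp e.1, e.2.2, e.2.1⟩

section HeightFn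

variable {D : Set V} {h h' : V → ℤ}

lemma IsHeightFn.mem_of_ne (hh : IsHeightFn D h) (hh' : IsHeightFn D h')
    {v : V} (hv : h v ≠ h' v) : v ∈ D := by
  by_contra hvD
  exact hv ((hh.2.2 v hvD).trans (hh'.2.2 v hvD).symm)

/-- Equal parity forces `|h u - h' u| ≥ 2`, so one step of size one cannot reverse the sign. -/
lemma IsHeightFn.lt_iff_lt_of_disagreeAdj (hh : IsHeightFn D h) (hh' : IsHeightFn D h')
    {u v : V} (e : DisagreeAdj h h' u v) :
    h u < h' u ↔ h v < h' v := by
  obtain ⟨huv, hu_ne, hv_ne⟩ := e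
  have hu := hh.mem_of_ne hh' hu_ne
  have hv := hh.mem_of_ne hh' hv_ne
  have hstep := abs_eq (zero_le_one' ℤ) |>.mp (hh.1 u v hu hv huv)
  have hstep' := abs_eq (zero_le_one' ℤ) |>.mp (hh'.1 u v hu hv huv)
  obtain ⟨k, hk⟩ := hh.2.1 u hu
  obtain ⟨k', hk'⟩ := hh'.2.1 u hu
  omega

lemma IsHeightFn.lt_iff_lt_of_reflTransGen (hh : IsHeightFn D h) (hh' : IsHeightFn D h')
    {u v : V} (hr : Relation.ReflTransGen (DisagreeAdj h h') u v) :
    h u < h' u ↔ h v < h' v := by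
  induction hr with
  | refl => rfl
  | tail _ e ih => exact ih.trans (hh.lt_iff_lt_of_disagreeAdj hh' e)

lemma IsHeightFn.piecewise (hh : IsHeightFn D h) (hh' : IsHeightFn D h') (S : Set V)
    [DecidablePred (· ∈ S)] (hS : ∀ u v, DisagreeAdj h h' u v → u ∈ S → v ∈ S) :
    IsHeightFn D (S.piecewise h' h) := by
  have hedge : ∀ u v, adj u v → (S.piecewise h' h u = h u ∧ S.piecewise h' h v = h v) ∨
      (S.piecewise h' h u = h' u ∧ S.piecewise h' h v = h' v) := by
    intro u v huv
    by_cases hu : u ∈ S <;> by_cases hv : v ∈ S <;>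
      simp only [Set.piecewise_eq_of_mem, Set.piecewise_eq_of_notMem, hu, hv, not_false_eq_true,
        true_and, and_true, or_true, true_or]
    · by_contra! hne
      exact hv (hS u v ⟨huv, hne.1.symm, hne.2⟩ hu)
    · by_contra! hne
      exact hu (hS v u ⟨adj_comm.mp huv, hne.1.symm, hne.2⟩ hv)
  refine ⟨fun u v hu hv huv => ?_, fun v hv => ?_, fun v hv => ?_⟩
  · rcases hedge u v huv with ⟨eu, ev⟩ | ⟨eu, ev⟩
    · rw [eu, ev]; exact hh.1 u v hu hv huv
    · rw [eu, ev]; exact hh'.1 u v hu hv huv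
  · by_cases hvS : v ∈ S
    · rw [Set.piecewise_eq_of_mem _ _ _ hvS]; exact hh'.2.1 v hv
    · rw [Set.piecewise_eq_of_notMem _ _ _ hvS]; exact hh.2.1 v hv
  · by_cases hvS : v ∈ S
    · rw [Set.piecewise_eq_of_mem _ _ _ hvS]; exact hh'.2.2 v hv
    · rw [Set.piecewise_eq_of_notMem _ _ _ hvS]; exact hh.2.2 v hv

end HeightFn

lemma disagreeAdj_comm (h h' : V → ℤ) : DisagreeAdj h' h = DisagreeAdj h h' := by
  ext u v
  simp only [DisagreeAdj, ne_comm]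

lemma piecewise_pair_cases (S : Set V) [DecidablePred (· ∈ S)] (h h' : V → ℤ) (v : V) :
    (S.piecewise h' h v = h v ∧ S.piecewise h h' v = h' v) ∨
      (S.piecewise h' h v = h' v ∧ S.piecewise h h' v = h v) := by
  by_cases hv : v ∈ S <;> simp [hv]

lemma disagreeAdj_piecewise (S : Set V) [DecidablePred (· ∈ S)] (h h' : V → ℤ) :
    DisagreeAdj (S.piecewise h' h) (S.piecewise h h') = DisagreeAdj h h' := by
  ext u v
  unfold DisagreeAdj
  rcases piecewise_pair_cases S h h' u with ⟨eu, eu'⟩ | ⟨eu, eu'⟩ <;>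
    rcases piecewise_pair_cases S h h' v with ⟨ev, ev'⟩ | ⟨ev, ev'⟩ <;>
    simp only [eu, eu', ev, ev', ne_comm]

/-- The condition is phrased through `max` and `min` so that it is invariant under the
exchange (`swapSet_piecewise`). -/
def swapSet (B : Set V) (κ κ' : V → Set ℤ) (h h' : V → ℤ) : Set V :=
  {v | h v ≠ h' v ∧ ∀ u, Relation.ReflTransGen (DisagreeAdj h h') v u → u ∈ B →
    max (h u) (h' u) ∈ κ u ∧ min (h u) (h' u) ∈ κ' u}

lemma mem_swapSet_of_disagreeAdj {B : Set V} {κ κ' : V → Set ℤ} {h h' : V → ℤ} {u v : V}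
    (hu : u ∈ swapSet B κ κ' h h') (e : DisagreeAdj h h' u v) : v ∈ swapSet B κ κ' h h' :=
  ⟨e.2.2, fun w hw hwB => hu.2 w (Relation.ReflTransGen.head e hw) hwB⟩

lemma swapSet_piecewise (B : Set V) (κ κ' : V → Set ℤ) (S : Set V) [DecidablePred (· ∈ S)]
    (h h' : V → ℤ) :
    swapSet B κ κ' (S.piecewise h' h) (S.piecewise h h') = swapSet B κ κ' h h' := by
  have hpair (u : V) : (S.piecewise h' h u ≠ S.piecewise h h' u ↔ h u ≠ h' u) ∧
      max (S.piecewise h' h u) (S.piecewise h h' u) = max (h u) (h' u) ∧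
      min (S.piecewise h' h u) (S.piecewise h h' u) = min (h u) (h' u) := by
    rcases piecewise_pair_cases S h h' u with ⟨e, e'⟩ | ⟨e, e'⟩ <;>
      simp only [e, e', ne_comm, max_comm, min_comm, and_self]
  ext v
  simp only [swapSet, disagreeAdj_piecewise, (hpair _).1, (hpair _).2.1, (hpair _).2.2]

open Classical in
noncomputable def swapPair (B : Set V) (κ κ' : V → Set ℤ) (p : (V → ℤ) × (V → ℤ)) :
    (V → ℤ) × (V → ℤ) :=
  ((swapSet B κ κ' p.1 p.2).piecewise p.2 p.1, (swapSet B κ κ' p.1 p.2).piecewise p.1 p.2)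

lemma swapPair_swapPair (B : Set V) (κ κ' : V → Set ℤ) (p : (V → ℤ) × (V → ℤ)) :
    swapPair B κ κ' (swapPair B κ κ' p) = p := by
  classical
  unfold swapPair
  rw [swapSet_piecewise]
  ext v <;> by_cases hv : v ∈ swapSet B κ κ' p.1 p.2 <;> simp [hv]

section Coupling

variable {D B : Set V} {κ κ' : V → Set ℤ}

lemma swapPair_mem
    (hκκ' : ∀ v ∈ B, ∀ x ∈ κ v, ∀ y ∈ κ' v, min x y ∈ κ v ∧ max x y ∈ κ' v)
    {p : (V → ℤ) × (V → ℤ)} (hp : p ∈ HomSet D B κ ×ˢ HomSet D B κ') :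
    swapPair B κ κ' p ∈ HomSet D B κ ×ˢ HomSet D B κ' := by
  classical
  obtain ⟨⟨hh, hκ⟩, ⟨hh', hκ'⟩⟩ := hp
  simp only [swapPair, Set.mem_prod]
  set S := swapSet B κ κ' p.1 p.2
  have hS : ∀ u v, DisagreeAdj p.1 p.2 u v → u ∈ S → v ∈ S :=
    fun _ _ e hu => mem_swapSet_of_disagreeAdj hu e
  have hlattice (v) (hvB : v ∈ B) := hκκ' v hvB _ (hκ v hvB) _ (hκ' v hvB)
  refine ⟨⟨hh.piecewise hh' S hS, fun v hvB => ?_⟩,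
    ⟨hh'.piecewise hh S (by rwa [disagreeAdj_comm]), fun v hvB => ?_⟩⟩
  · by_cases hv : v ∈ S
    · rw [Set.piecewise_eq_of_mem _ _ _ hv]
      rcases le_total (p.1 v) (p.2 v) with hle | hle
      · simpa [max_eq_right hle] using (hv.2 v .refl hvB).1
      · simpa [min_eq_right hle] using (hlattice v hvB).1
    · rw [Set.piecewise_eq_of_notMem _ _ _ hv]
      exact hκ v hvB
  · by_cases hv : v ∈ S
    · rw [Set.piecewise_eq_of_mem _ _ _ hv]
      rcases le_total (p.1 v) (p.2 v) with hle | hle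
      · simpa [min_eq_left hle] using (hv.2 v .refl hvB).2
      · simpa [max_eq_left hle] using (hlattice v hvB).2
    · rw [Set.piecewise_eq_of_notMem _ _ _ hv]
      exact hκ' v hvB

/-- Where `h > h'`, the whole disagreement cluster has `h > h'`, so it satisfies the
constraints after exchange and belongs to the `swapSet`. -/
lemma fst_le_swapPair_snd {p : (V → ℤ) × (V → ℤ)}
    (hp : p ∈ HomSet D B κ ×ˢ HomSet D B κ') (v : V) :
    p.1 v ≤ (swapPair B κ κ' p).2 v := by
  classical
  obtain ⟨⟨hh, hκ⟩, ⟨hh', hκ'⟩⟩ := hp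
  by_cases hv : v ∈ swapSet B κ κ' p.1 p.2
  · simp [swapPair, hv]
  simp only [swapPair, Set.piecewise_eq_of_notMem _ _ _ hv]
  by_contra! hlt
  refine hv ⟨hlt.ne', fun u hr huB => ?_⟩
  have hgt : p.2 u < p.1 u :=
    (hh'.lt_iff_lt_of_reflTransGen hh (by rwa [disagreeAdj_comm])).mp hlt
  rw [max_eq_left hgt.le, min_eq_right hgt.le]
  exact ⟨hκ u huB, hκ' u huB⟩

theorem expec_homSet_le_of_min_max_mem (hfin : (HomSet D B κ).Finite)
    (hfin' : (HomSet D B κ').Finite) (hne : (HomSet D B κ).Nonempty)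
    (hne' : (HomSet D B κ').Nonempty)
    (hκκ' : ∀ v ∈ B, ∀ x ∈ κ v, ∀ y ∈ κ' v, min x y ∈ κ v ∧ max x y ∈ κ' v)
    {F : (V → ℤ) → ℝ} (hF : IncreasingOn D F) :
    expec (HomSet D B κ) F ≤ expec (HomSet D B κ') F :=
  expec_le_expec_of_involution hfin hfin' hne hne' F (swapPair B κ κ')
    (fun _ hp => swapPair_mem hκκ' hp) (swapPair_swapPair B κ κ')
    (fun _ hp => hF _ _ fun v _ => fst_le_swapPair_snd hp v)

end Coupling

theorem cbc_h_general (D : Set V) (B : Set V)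
    (κ κ' : V → Set ℤ) (a b a' b' : V → EReal)
    (hκ : ∀ v ∈ B, κ v = {x : ℤ | a v ≤ ((x : ℝ) : EReal) ∧ ((x : ℝ) : EReal) ≤ b v})
    (hκ' : ∀ v ∈ B, κ' v = {x : ℤ | a' v ≤ ((x : ℝ) : EReal) ∧ ((x : ℝ) : EReal) ≤ b' v})
    (ha : ∀ v ∈ B, a v ≤ a' v) (hb : ∀ v ∈ B, b v ≤ b' v)
    (hne : (HomSet D B κ).Nonempty) (hfin : (HomSet D B κ).Finite)
    (hne' : (HomSet D B κ').Nonempty) (hfin' : (HomSet D B κ').Finite)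
    (F : (V → ℤ) → ℝ) (hF : IncreasingOn D F) :
    expec (HomSet D B κ) F ≤ expec (HomSet D B κ') F := by
  have hcast : Monotone (fun x : ℤ => ((x : ℝ) : EReal)) :=
    fun x y hxy => EReal.coe_le_coe_iff.mpr (Int.cast_le.mpr hxy)
  refine expec_homSet_le_of_min_max_mem hfin hfin' hne hne' (fun v hvB x hx y hy => ?_) hF
  rw [hκ v hvB] at hx ⊢
  rw [hκ' v hvB] at hy ⊢
  exact min_max_mem_of_le hcast (ha v hvB) (hb v hvB) hx hy

/-- Comparison between boundary conditions for `h`. -/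
theorem cbc_h (D : Set V) (hD : D.Finite) (B : Set V) (hB : B ⊆ D)
    (κ κ' : V → Set ℤ) (a b a' b' : V → EReal)
    (hκ : ∀ v ∈ B, κ v = {x : ℤ | a v ≤ ((x : ℝ) : EReal) ∧ ((x : ℝ) : EReal) ≤ b v})
    (hκ' : ∀ v ∈ B, κ' v = {x : ℤ | a' v ≤ ((x : ℝ) : EReal) ∧ ((x : ℝ) : EReal) ≤ b' v})
    (ha : ∀ v ∈ B, a v ≤ a' v) (hb : ∀ v ∈ B, b v ≤ b' v)
    (hne : (HomSet D B κ).Nonempty) (hfin : (HomSet D B κ).Finite)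
    (hne' : (HomSet D B κ').Nonempty) (hfin' : (HomSet D B κ').Finite)
    (F : (V → ℤ) → ℝ) (hF : IncreasingOn D F) :
    expec (HomSet D B κ) F ≤ expec (HomSet D B κ') F :=
  cbc_h_general D B κ κ' a b a' b' hκ hκ' ha hb hne hfin hne' hfin' F hF

end SquareIce
end

section
/- (FKG inequality for h.) Let D be a finite subset of ℤ², B ⊆ D, and let (B,κ) be an admissible boundary condition such that κ_v is a (possibly unbounded) integer interval for every v ∈ B. Then for any two increasing functions F, G : ℤ^D → ℝ, φ_D^{B,κ}[F(h)G(h)] ≥ φ_D^{B,κ}[F(h)] · φ_D^{B,κ}[G(h)]. -/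
open scoped BigOperators

namespace SquareIce

/-!
Pointwise maximum and minimum of two height functions are again height functions (two values of
the same parity differing from their neighbours by one keep doing so after taking max or min), and
they respect any constraint `h v ∈ κ v` since they pick one of the two values. So the admissible
height functions form a finite distributive sublattice of `ℤ^D`, and the uniform measure on it
satisfies the FKG lattice condition trivially; the inequality is then the FKG inequality for finite
distributive lattices.
-/

open Finset

theorem sum_mul_sum_le_card_mul_sum_of_monotone {α : Type*} [DistribLattice α] [Fintype α]
    {f g : α → ℝ} (hf : Monotone f) (hg : Monotone g) :
    (∑ a, f a) * ∑ a, g a ≤ Fintype.card α * ∑ a, f a * g a := by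
  cases isEmpty_or_nonempty α
  · simp
  -- `fkg` wants nonnegative functions; the inequality is invariant under shifting `f`, `g`.
  obtain ⟨a₀, ha₀⟩ := Finite.exists_min f
  obtain ⟨b₀, hb₀⟩ := Finite.exists_min g
  have key := fkg (μ := 1) (f := fun a => f a - f a₀) (g := fun a => g a - g b₀) zero_le_one
    (fun a => sub_nonneg.2 (ha₀ a)) (fun a => sub_nonneg.2 (hb₀ a))
    (fun a b hab => sub_le_sub_right (hf hab) _) (fun a b hab => sub_le_sub_right (hg hab) _)
    (fun _ _ => le_rfl)
  simp only [Pi.one_apply, one_mul, sum_const, card_univ, nsmul_eq_mul, mul_one, sub_mul, mul_sub,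
    sum_sub_distrib, ← sum_mul, ← mul_sum] at key
  linear_combination key

lemma expec_coe_eq_sum {α S : Type*} [SetLike S α] (L : S) [Fintype L] (f : α → ℝ) :
    expec L f = (∑ x : L, f x) / Fintype.card L := by
  rw [expec, ← finsum_set_coe_eq_finsum_mem, Nat.card_eq_fintype_card]
  exact congrArg (· / _) (finsum_eq_sum_of_fintype _)

theorem expec_mul_expec_le_expec_mul {α : Type*} [DistribLattice α] (L : Sublattice α)
    (hL : (L : Set α).Finite) {f g : α → ℝ} (hf : MonotoneOn f L) (hg : MonotoneOn g L) :
    expec L f * expec L g ≤ expec L (fun a => f a * g a) := by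
  have : Fintype L := hL.fintype
  have key := sum_mul_sum_le_card_mul_sum_of_monotone (α := L)
    (fun a b hab => hf a.2 b.2 hab) (fun a b hab => hg a.2 b.2 hab)
  simp only [expec_coe_eq_sum, div_mul_div_comm]
  rcases (Fintype.card L).eq_zero_or_pos with hn | hn
  · simp [hn]
  rw [div_le_div_iff₀ (by positivity) (by positivity)]
  nlinarith

lemma abs_max_sub_max_eq_one {a b c d : ℤ} (hac : |a - c| = 1) (hbd : |b - d| = 1)
    (hab : Even (a - b)) : |max a b - max c d| = 1 := by
  obtain ⟨k, hk⟩ := hab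
  rw [Int.abs_eq_natAbs] at hac hbd ⊢
  omega

lemma abs_min_sub_min_eq_one {a b c d : ℤ} (hac : |a - c| = 1) (hbd : |b - d| = 1)
    (hab : Even (a - b)) : |min a b - min c d| = 1 := by
  obtain ⟨k, hk⟩ := hab
  rw [Int.abs_eq_natAbs] at hac hbd ⊢
  omega

section HeightFn

variable {D : Set V} {h h' : V → ℤ}

lemma IsHeightFn.even_sub (hh : IsHeightFn D h) (hh' : IsHeightFn D h') {v : V} (hv : v ∈ D) :
    Even (h v - h' v) := by
  simpa using (hh.2.1 v hv).sub (hh'.2.1 v hv)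

lemma IsHeightFn.sup (hh : IsHeightFn D h) (hh' : IsHeightFn D h') : IsHeightFn D (h ⊔ h') := by
  refine ⟨fun u v hu hv huv => ?_, fun v hv => ?_, fun v hv => ?_⟩
  · exact abs_max_sub_max_eq_one (hh.1 u v hu hv huv) (hh'.1 u v hu hv huv) (hh.even_sub hh' hu)
  · exact max_rec' (fun z => Even (z + v.1 + v.2)) (hh.2.1 v hv) (hh'.2.1 v hv)
  · simp only [Pi.sup_apply, hh.2.2 v hv, hh'.2.2 v hv, max_self]

lemma IsHeightFn.inf (hh : IsHeightFn D h) (hh' : IsHeightFn D h') : IsHeightFn D (h ⊓ h') := by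
  refine ⟨fun u v hu hv huv => ?_, fun v hv => ?_, fun v hv => ?_⟩
  · exact abs_min_sub_min_eq_one (hh.1 u v hu hv huv) (hh'.1 u v hu hv huv) (hh.even_sub hh' hu)
  · exact min_rec' (fun z => Even (z + v.1 + v.2)) (hh.2.1 v hv) (hh'.2.1 v hv)
  · simp only [Pi.inf_apply, hh.2.2 v hv, hh'.2.2 v hv, min_self]

end HeightFn

def homSublattice (D B : Set V) (κ : V → Set ℤ) : Sublattice (V → ℤ) where
  carrier := HomSet D B κ
  supClosed' := fun _ hh _ hh' => ⟨hh.1.sup hh'.1, fun v hv =>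
    max_rec' (· ∈ κ v) (hh.2 v hv) (hh'.2 v hv)⟩
  infClosed' := fun _ hh _ hh' => ⟨hh.1.inf hh'.1, fun v hv =>
    min_rec' (· ∈ κ v) (hh.2 v hv) (hh'.2 v hv)⟩

theorem fkg_h_general (D : Set V) (B : Set V)
    (κ : V → Set ℤ) (hfin : (HomSet D B κ).Finite)
    (F G : (V → ℤ) → ℝ) (hF : IncreasingOn D F) (hG : IncreasingOn D G) :
    expec (HomSet D B κ) F * expec (HomSet D B κ) G ≤
      expec (HomSet D B κ) (fun h => F h * G h) :=
  expec_mul_expec_le_expec_mul (homSublattice D B κ) hfin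
    (fun h _ h' _ hle => hF h h' fun v _ => hle v) (fun h _ h' _ hle => hG h h' fun v _ => hle v)

/-- The FKG inequality for `h`. -/
theorem fkg_h (D : Set V) (hD : D.Finite) (B : Set V) (hB : B ⊆ D)
    (κ : V → Set ℤ) (hint : ∀ v ∈ B, (κ v).OrdConnected)
    (hne : (HomSet D B κ).Nonempty) (hfin : (HomSet D B κ).Finite)
    (F G : (V → ℤ) → ℝ) (hF : IncreasingOn D F) (hG : IncreasingOn D G) :
    expec (HomSet D B κ) F * expec (HomSet D B κ) G ≤
      expec (HomSet D B κ) (fun h => F h * G h) :=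
  fkg_h_general D B κ hfin F G hF hG

end SquareIce
end

section
/- (FKG inequality for |h|.) Let D be a finite subset of ℤ², B ⊆ D, and let (B,κ) be an admissible |h|-adapted boundary condition such that κ_v ∩ ℤ₊ is an integer interval for every v ∈ B. Then for any two increasing functions F, G : ℤ^D → ℝ, φ_D^{B,κ}[F(|h|)G(|h|)] ≥ φ_D^{B,κ}[F(|h|)] · φ_D^{B,κ}[G(|h|)], where |h| denotes the pointwise absolute value of h. -/
/-!
Under the uniform measure on `HomSet D B κ`, the law of `|h|` is carried by the nonnegative
elements of `HomSet D B κ`, a sublattice of `V → ℤ`, with weight `μ f = #{h | |h| = f}`. By the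
Ahlswede–Daykin form of the FKG inequality it suffices that `μ` is log-supermodular.

Flipping the sign of `h` on a component of `X = supp f` keeps `|h| = f` and is allowed exactly when
the component avoids `Bpos` (the constraints on `Bsym` are symmetric). Hence, if `J X` is the
`ZMod 2`-space of sign patterns constant along edges of `X`, zero on `X ∩ Bpos` and free on
`D \ X`, then `#J X = μ f · 2 ^ #(D \ X)`. Parity forbids an edge between `supp f \ supp g` and
`supp g \ supp f`, so `J X ⊔ J Y ≤ J (X ∩ Y)` and `J X ⊓ J Y ≤ J (X ∪ Y)`, and the dimension formula
for `J X ⊔ J Y` and `J X ⊓ J Y` yields `μ f · μ g ≤ μ (f ⊓ g) · μ (f ⊔ g)`.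
-/

open scoped BigOperators

section

open Finset

theorem fkg_of_ring {α β : Type*} [DistribLattice α] [Fintype α] [CommRing β] [LinearOrder β]
    [IsStrictOrderedRing β] {μ f g : α → β} (hμ₀ : 0 ≤ μ) (hf : Monotone f) (hg : Monotone g)
    (hμ : ∀ a b, μ a * μ b ≤ μ (a ⊓ b) * μ (a ⊔ b)) :
    (∑ a, μ a * f a) * ∑ a, μ a * g a ≤ (∑ a, μ a) * ∑ a, μ a * (f a * g a) := by
  cases isEmpty_or_nonempty α
  · simp
  let := Fintype.toOrderBot α
  -- shifting `f` and `g` by constants changes both sides by the same amount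
  have key := fkg (fun a => f a - f ⊥) (fun a => g a - g ⊥) μ hμ₀
    (fun a => sub_nonneg.2 (hf bot_le)) (fun a => sub_nonneg.2 (hg bot_le))
    (fun a b hab => sub_le_sub_right (hf hab) _) (fun a b hab => sub_le_sub_right (hg hab) _) hμ
  simp only [mul_sub, sub_mul, sum_sub_distrib, ← sum_mul] at key
  have e₁ : ∑ a, μ a * (f ⊥ * g a) = f ⊥ * ∑ a, μ a * g a := by
    rw [mul_sum]; exact sum_congr rfl fun _ _ => by ring
  have e₂ : ∑ a, μ a * (f a * g ⊥) = g ⊥ * ∑ a, μ a * f a := by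
    rw [mul_sum]; exact sum_congr rfl fun _ _ => by ring
  rw [e₁, e₂] at key
  linarith

theorem Finset.fkg_of_isSublattice {α β : Type*} [DistribLattice α] [CommRing β] [LinearOrder β]
    [IsStrictOrderedRing β] {s : Finset α} (hs : IsSublattice (s : Set α)) {μ f g : α → β}
    (hμ₀ : ∀ a ∈ s, 0 ≤ μ a) (hf : MonotoneOn f s) (hg : MonotoneOn g s)
    (hμ : ∀ a ∈ s, ∀ b ∈ s, μ a * μ b ≤ μ (a ⊓ b) * μ (a ⊔ b)) :
    (∑ a ∈ s, μ a * f a) * ∑ a ∈ s, μ a * g a ≤ (∑ a ∈ s, μ a) * ∑ a ∈ s, μ a * (f a * g a) := by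
  let L : Sublattice α := ⟨s, hs.supClosed, hs.infClosed⟩
  let : Fintype L := inferInstanceAs (Fintype s)
  have hsum (φ : α → β) : ∑ a ∈ s, φ a = ∑ a : L, φ a := sum_subtype s (fun _ => Iff.rfl) φ
  simp only [hsum]
  exact fkg_of_ring (μ := fun a : L => μ a) (f := fun a : L => f a) (g := fun a : L => g a)
    (fun a => hμ₀ a a.2) (fun a b hab => hf a.2 b.2 hab) (fun a b hab => hg a.2 b.2 hab)
    (fun a b => hμ a a.2 b b.2)

end

theorem Submodule.card_mul_card_le_card_mul_card {K M : Type*} [Field K] [Finite K]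
    [AddCommGroup M] [Module K M] {p q r t : Submodule K M} [Finite p] [Finite q] [Finite r]
    [Finite t] (hr : p ⊔ q ≤ r) (ht : p ⊓ q ≤ t) :
    Nat.card p * Nat.card q ≤ Nat.card r * Nat.card t := by
  have hcard (N : Submodule K M) [Finite N] : Nat.card N = Nat.card K ^ Module.finrank K N :=
    Module.natCard_eq_pow_finrank
  rw [hcard p, hcard q, hcard r, hcard t, ← pow_add, ← pow_add]
  refine Nat.pow_le_pow_right Nat.card_pos ?_
  rw [← Submodule.finrank_sup_add_finrank_inf_eq]
  exact add_le_add (Submodule.finrank_mono hr) (Submodule.finrank_mono ht)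

open Classical in
noncomputable def funVanishingOffEquiv {α M : Type*} [Zero M] (Y : Set α) :
    {t : α → M // ∀ v ∉ Y, t v = 0} ≃ (Y → M) where
  toFun t v := t.1 v
  invFun u := ⟨fun v => if hv : v ∈ Y then u ⟨v, hv⟩ else 0, fun v hv => dif_neg hv⟩
  left_inv t := by
    ext v
    by_cases hv : v ∈ Y
    · simp [hv]
    · simp [hv, t.2 v hv]
  right_inv u := by
    ext v
    simp

lemma Nat.card_funVanishingOff {α M : Type*} [Zero M] {Y : Set α} (hY : Y.Finite) :
    Nat.card {t : α → M // ∀ v ∉ Y, t v = 0} = Nat.card M ^ Nat.card Y := by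
  have := hY.to_subtype
  rw [Nat.card_congr (funVanishingOffEquiv Y), Nat.card_fun]

lemma ZMod.two_eq_zero_or_one (x : ZMod 2) : x = 0 ∨ x = 1 := by
  fin_cases x
  exacts [Or.inl rfl, Or.inr rfl]

open Function in
lemma Function.support_inf_of_nonneg {α : Type*} {f g : α → ℤ} (hf : 0 ≤ f) (hg : 0 ≤ g) :
    support (f ⊓ g) = support f ∩ support g := by
  ext v
  have : 0 ≤ f v := hf v
  have : 0 ≤ g v := hg v
  simp only [mem_support, Pi.inf_apply, Set.mem_inter_iff]
  omega

open Function in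
lemma Function.support_sup_of_nonneg {α : Type*} {f g : α → ℤ} (hf : 0 ≤ f) (hg : 0 ≤ g) :
    support (f ⊔ g) = support f ∪ support g := by
  ext v
  have : 0 ≤ f v := hf v
  have : 0 ≤ g v := hg v
  simp only [mem_support, Pi.sup_apply, Set.mem_union]
  omega

namespace SquareIce

open Finset in
theorem fkg_expec_comp {α L : Type*} [DistribLattice L] {S : Set α} (hS : S.Finite) (π : α → L)
    (hπ : IsSublattice (π '' S))
    (hw : ∀ a ∈ π '' S, ∀ b ∈ π '' S,
      Nat.card {x ∈ S | π x = a} * Nat.card {x ∈ S | π x = b} ≤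
        Nat.card {x ∈ S | π x = a ⊓ b} * Nat.card {x ∈ S | π x = a ⊔ b})
    {F G : L → ℝ} (hF : Monotone F) (hG : Monotone G) :
    expec S (fun x => F (π x)) * expec S (fun x => G (π x)) ≤
      expec S (fun x => F (π x) * G (π x)) := by
  classical
  set s := hS.toFinset
  set w : L → ℝ := fun a => #{x ∈ s | π x = a}
  have hw_card (a : L) : #{x ∈ s | π x = a} = Nat.card {x ∈ S | π x = a} := by
    rw [Nat.card_coe_set_eq, ← Set.ncard_coe_finset]
    congr 1
    ext x
    simp [s]
  have hexp (φ : L → ℝ) : expec S (fun x => φ (π x)) = (∑ a ∈ s.image π, w a * φ a) / #s := by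
    rw [expec, finsum_mem_eq_finite_toFinset_sum _ hS, Nat.card_eq_card_finite_toFinset hS,
      sum_comp]
    simp only [nsmul_eq_mul, w, s]
  have hmass : ∑ a ∈ s.image π, w a = #s := by
    simp only [w]
    exact_mod_cast (card_eq_sum_card_image π s).symm
  have himage : (s.image π : Set L) = π '' S := by simp [s]
  have key := Finset.fkg_of_isSublattice (s := s.image π) (μ := w) (himage ▸ hπ)
    (fun _ _ => Nat.cast_nonneg _) (hF.monotoneOn _) (hG.monotoneOn _) (fun a ha b hb => by
      rw [← Finset.mem_coe, himage] at ha hb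
      simp only [w, hw_card]
      exact_mod_cast hw a ha b hb)
  have hFG := hexp (fun a => F a * G a)
  rw [hexp F, hexp G, hFG]
  rw [hmass] at key
  rcases (Nat.cast_nonneg (α := ℝ) #s).eq_or_lt with hn | hn
  · simp [← hn]
  · rw [div_mul_div_comm, div_le_div_iff₀ (by positivity) hn]
    nlinarith

lemma adj_symm {u v : V} (h : adj u v) : adj v u := by
  unfold adj at *
  omega

section HeightFunctions

variable {D : Set V} {f g h : V → ℤ}

lemma IsHeightFn.support_subset (hf : IsHeightFn D f) : Function.support f ⊆ D :=
  fun v hv => by_contra fun hvD => hv (hf.2.2 v hvD)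

lemma IsHeightFn.even_sub_s7 (hf : IsHeightFn D f) (hg : IsHeightFn D g) {v : V} (hv : v ∈ D) :
    Even (f v - g v) := by
  obtain ⟨k, hk⟩ := hf.2.1 v hv
  obtain ⟨l, hl⟩ := hg.2.1 v hv
  exact ⟨k - l, by omega⟩

lemma IsHeightFn.sup_s7 (hf : IsHeightFn D f) (hg : IsHeightFn D g) : IsHeightFn D (f ⊔ g) := by
  refine ⟨fun u v hu hv huv => ?_, fun v hv => ?_, fun v hv => ?_⟩
  · obtain ⟨k, hk⟩ := hf.even_sub_s7 hg hu
    obtain ⟨l, hl⟩ := hf.even_sub_s7 hg hv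
    have := hf.1 u v hu hv huv
    have := hg.1 u v hu hv huv
    simp only [Pi.sup_apply, Int.abs_eq_natAbs] at *
    omega
  · rcases max_choice (f v) (g v) with h | h
    · simpa [h] using hf.2.1 v hv
    · simpa [h] using hg.2.1 v hv
  · simp [hf.2.2 v hv, hg.2.2 v hv]

lemma IsHeightFn.neg (hf : IsHeightFn D f) : IsHeightFn D (-f) := by
  refine ⟨fun u v hu hv huv => ?_, fun v hv => ?_, fun v hv => by simp [hf.2.2 v hv]⟩
  · rw [Pi.neg_apply, Pi.neg_apply, neg_sub_neg, abs_sub_comm]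
    exact hf.1 u v hu hv huv
  · obtain ⟨k, hk⟩ := hf.2.1 v hv
    exact ⟨k - f v, by simp only [Pi.neg_apply]; omega⟩

lemma IsHeightFn.inf_s7 (hf : IsHeightFn D f) (hg : IsHeightFn D g) : IsHeightFn D (f ⊓ g) := by
  simpa [neg_sup] using (hf.neg.sup_s7 hg.neg).neg

lemma IsHeightFn.abs (hh : IsHeightFn D h) : IsHeightFn D (fun v => |h v|) := by
  have habs : (fun v => |h v|) = h ⊔ -h := funext fun v => abs_eq_max_neg
  exact habs ▸ hh.sup_s7 hh.neg

lemma IsHeightFn.neg_iff_neg_of_adj (hh : IsHeightFn D h) {u v : V} (hu : u ∈ D) (hv : v ∈ D)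
    (huv : adj u v) (hu0 : h u ≠ 0) (hv0 : h v ≠ 0) : h u < 0 ↔ h v < 0 := by
  have := hh.1 u v hu hv huv
  simp only [Int.abs_eq_natAbs] at this
  omega

/-- Otherwise `f u = ±1` and `g u = 0` would have different parities. -/
lemma IsHeightFn.ne_zero_or_ne_zero_of_adj (hf : IsHeightFn D f) (hg : IsHeightFn D g)
    {u v : V} (huv : adj u v) (hfu : f u ≠ 0) (hgv : g v ≠ 0) : g u ≠ 0 ∨ f v ≠ 0 := by
  by_contra! hcon
  have hu := hf.support_subset hfu
  have hv := hg.support_subset hgv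
  obtain ⟨k, hk⟩ := hf.even_sub_s7 hg hu
  have := hf.1 u v hu hv huv
  have := hg.1 u v hu hv huv
  simp only [Int.abs_eq_natAbs] at *
  omega

variable {B : Set V} {κ : V → Set ℤ}

lemma sup_mem_homSet (hf : f ∈ HomSet D B κ) (hg : g ∈ HomSet D B κ) : f ⊔ g ∈ HomSet D B κ :=
  ⟨hf.1.sup_s7 hg.1, fun v hv => by
    rcases max_choice (f v) (g v) with h | h <;> simp only [Pi.sup_apply, h, hf.2 v hv, hg.2 v hv]⟩

lemma inf_mem_homSet (hf : f ∈ HomSet D B κ) (hg : g ∈ HomSet D B κ) : f ⊓ g ∈ HomSet D B κ :=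
  ⟨hf.1.inf_s7 hg.1, fun v hv => by
    rcases min_choice (f v) (g v) with h | h <;> simp only [Pi.inf_apply, h, hf.2 v hv, hg.2 v hv]⟩

lemma isSublattice_nonneg_homSet : IsSublattice {f ∈ HomSet D B κ | 0 ≤ f} :=
  ⟨fun _ hf _ hg => ⟨sup_mem_homSet hf.1 hg.1, le_sup_of_le_left hf.2⟩,
    fun _ hf _ hg => ⟨inf_mem_homSet hf.1 hg.1, le_inf hf.2 hg.2⟩⟩

variable {Bpos Bsym : Set V} (hup : Bpos ∪ Bsym = B) (hposκ : ∀ v ∈ Bpos, κ v ⊆ {x : ℤ | 0 ≤ x})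
  (hsymκ : ∀ v ∈ Bsym, κ v = (fun x : ℤ => -x) '' κ v)
include hup hposκ hsymκ

lemma abs_mem_homSet (hh : h ∈ HomSet D B κ) : (fun v => |h v|) ∈ HomSet D B κ := by
  refine ⟨hh.1.abs, fun v hv => ?_⟩
  have hκ := hh.2 v hv
  show |h v| ∈ κ v
  rcases hup ▸ hv with hv | hv
  · rwa [abs_of_nonneg (show 0 ≤ h v from hposκ v hv hκ)]
  · rcases abs_choice (h v) with h' | h' <;> rw [h']
    · exact hκ
    · rw [hsymκ v hv]; exact ⟨h v, hκ, rfl⟩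

lemma image_abs_homSet :
    (fun h v => |h v|) '' HomSet D B κ = {f ∈ HomSet D B κ | 0 ≤ f} := by
  ext f
  constructor
  · rintro ⟨h, hh, rfl⟩
    exact ⟨abs_mem_homSet hup hposκ hsymκ hh, fun v => abs_nonneg _⟩
  · rintro ⟨hf, hf0⟩
    exact ⟨f, hf, funext fun v => abs_of_nonneg (hf0 v)⟩

end HeightFunctions

section SignPatterns

open Function

/-- Sign patterns of height functions `h` with `|h| = f`, for `X = support f`: `s v = 1` marks
`h v < 0`. The values on `D \ X` are left free so that `signSpace D P X` is antitone in `X`. -/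
def signSpace (D P X : Set V) : Submodule (ZMod 2) (V → ZMod 2) where
  carrier := {s | (∀ v ∉ D, s v = 0) ∧ (∀ u ∈ X, ∀ v ∈ X, adj u v → s u = s v) ∧
    ∀ v ∈ X ∩ P, s v = 0}
  add_mem' := fun ⟨hs₁, hs₂, hs₃⟩ ⟨ht₁, ht₂, ht₃⟩ =>
    ⟨fun v hv => by simp [hs₁ v hv, ht₁ v hv],
      fun u hu v hv huv => by simp [hs₂ u hu v hv huv, ht₂ u hu v hv huv],
      fun v hv => by simp [hs₃ v hv, ht₃ v hv]⟩
  zero_mem' := ⟨fun _ _ => rfl, fun _ _ _ _ _ => rfl, fun _ _ => rfl⟩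
  smul_mem' c _ := fun ⟨hs₁, hs₂, hs₃⟩ =>
    ⟨fun v hv => by simp [hs₁ v hv], fun u hu v hv huv => by simp [hs₂ u hu v hv huv],
      fun v hv => by simp [hs₃ v hv]⟩

variable {D P X Y : Set V}

lemma signSpace_anti (hXY : X ⊆ Y) : signSpace D P Y ≤ signSpace D P X :=
  fun _ ⟨hs₁, hs₂, hs₃⟩ =>
    ⟨hs₁, fun u hu v hv => hs₂ u (hXY hu) v (hXY hv), fun v hv => hs₃ v ⟨hXY hv.1, hv.2⟩⟩

lemma inf_signSpace_le_union (hXY : ∀ u ∈ X, ∀ v ∈ Y, adj u v → u ∈ Y ∨ v ∈ X) :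
    signSpace D P X ⊓ signSpace D P Y ≤ signSpace D P (X ∪ Y) := by
  rintro s ⟨⟨hs₁, hX, hXP⟩, ⟨-, hY, hYP⟩⟩
  refine ⟨hs₁, ?_, fun v ⟨hv, hvP⟩ => hv.elim (fun hv => hXP v ⟨hv, hvP⟩)
    (fun hv => hYP v ⟨hv, hvP⟩)⟩
  rintro u (hu | hu) v (hv | hv) huv
  · exact hX u hu v hv huv
  · rcases hXY u hu v hv huv with hu' | hv'
    exacts [hY u hu' v hv huv, hX u hu v hv' huv]
  · rcases hXY v hv u hu (adj_symm huv) with hv' | hu'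
    exacts [hY u hu v hv' huv, hX u hu' v hv huv]
  · exact hY u hu v hv huv

lemma finite_signSpace (hD : D.Finite) : Finite (signSpace D P X) := by
  have := hD.to_subtype
  have hfin : {t : V → ZMod 2 | ∀ v ∉ D, t v = 0}.Finite :=
    Set.finite_coe_iff.mp (Finite.of_equiv _ (funVanishingOffEquiv D).symm)
  exact (hfin.subset fun _ hs => hs.1).to_subtype

lemma mem_signSpace_of_vanishing_off_diff {t : V → ZMod 2} (ht : ∀ v ∉ D \ X, t v = 0) :
    t ∈ signSpace D P X :=
  ⟨fun v hv => ht v fun h => hv h.1, fun u hu v hv _ => by rw [ht u (·.2 hu), ht v (·.2 hv)],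
    fun v hv => ht v (·.2 hv.1)⟩

end SignPatterns

section Fibers

open Function

def twist (s : V → ZMod 2) (f : V → ℤ) : V → ℤ := fun v => if s v = 1 then -f v else f v

def signBit (h : V → ℤ) : V → ZMod 2 := fun v => if h v < 0 then 1 else 0

variable {D B : Set V} {κ : V → Set ℤ} {f g h : V → ℤ} {s : V → ZMod 2}

lemma twist_eq_or_eq_neg (s : V → ZMod 2) (f : V → ℤ) (v : V) :
    twist s f v = f v ∨ twist s f v = -f v := by
  unfold twist; split_ifs <;> simp

lemma abs_twist (hf0 : 0 ≤ f) : (fun v => |twist s f v|) = f :=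
  funext fun v => by rcases twist_eq_or_eq_neg s f v with h | h <;>
    simp [h, abs_of_nonneg (hf0 v)]

lemma twist_congr {s' : V → ZMod 2} (hss' : ∀ v ∈ support f, s v = s' v) :
    twist s f = twist s' f := by
  funext v
  by_cases hv : v ∈ support f
  · simp [twist, hss' v hv]
  · simp [twist, notMem_support.mp hv]

lemma twist_signBit (hhf : (fun v => |h v|) = f) : twist (signBit h) f = h := by
  subst hhf
  funext v
  by_cases hv : h v < 0 <;> simp [twist, signBit, hv, abs_of_neg, abs_of_nonneg, not_lt.mp]

lemma signBit_twist (hf0 : 0 ≤ f) {v : V} (hv : v ∈ support f) : signBit (twist s f) v = s v := by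
  have hfv : 0 < f v := lt_of_le_of_ne (hf0 v) (Ne.symm hv)
  rcases ZMod.two_eq_zero_or_one (s v) with hs | hs <;>
    simp [signBit, twist, hs, hfv, hfv.le, not_lt.mpr]

lemma signBit_eq_zero_of_notMem_support {v : V} (hv : v ∉ support h) : signBit h v = 0 := by
  simp [signBit, notMem_support.mp hv]

lemma IsHeightFn.twist_of_adj (hf : IsHeightFn D f)
    (hs : ∀ u ∈ support f, ∀ v ∈ support f, adj u v → s u = s v) :
    IsHeightFn D (twist s f) := by
  refine ⟨fun u v hu hv huv => ?_, fun v hv => ?_, fun v hv => ?_⟩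
  · have hfuv := hf.1 u v hu hv huv
    by_cases hfu : f u = 0
    · have hu : twist s f u = 0 := by simp [twist, hfu]
      rcases twist_eq_or_eq_neg s f v with h | h <;> rw [hu, h] <;>
        simp only [Int.abs_eq_natAbs] at * <;> omega
    by_cases hfv : f v = 0
    · have hv : twist s f v = 0 := by simp [twist, hfv]
      rcases twist_eq_or_eq_neg s f u with h | h <;> rw [hv, h] <;>
        simp only [Int.abs_eq_natAbs] at * <;> omega
    have hsuv := hs u hfu v hfv huv
    rcases ZMod.two_eq_zero_or_one (s u) with h | h
    · simpa [twist, h, ← hsuv] using hfuv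
    · simp only [twist, ← hsuv, h, if_true]
      rwa [neg_sub_neg, abs_sub_comm]
  · obtain ⟨k, hk⟩ := hf.2.1 v hv
    rcases twist_eq_or_eq_neg s f v with h | h <;> rw [h]
    exacts [⟨k, hk⟩, ⟨k - f v, by omega⟩]
  · rcases twist_eq_or_eq_neg s f v with h | h <;> simp [h, hf.2.2 v hv]

variable {Bpos Bsym : Set V} (hup : Bpos ∪ Bsym = B) (hposκ : ∀ v ∈ Bpos, κ v ⊆ {x : ℤ | 0 ≤ x})
  (hsymκ : ∀ v ∈ Bsym, κ v = (fun x : ℤ => -x) '' κ v)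

include hup hsymκ in
lemma twist_mem_homSet (hf : f ∈ HomSet D B κ)
    (hs : s ∈ signSpace D Bpos (support f)) : twist s f ∈ HomSet D B κ := by
  refine ⟨hf.1.twist_of_adj hs.2.1, fun v hv => ?_⟩
  rcases hup ▸ hv with hvP | hvS
  · by_cases hfv : f v = 0
    · rcases twist_eq_or_eq_neg s f v with h | h <;>
        simp only [h, hfv, neg_zero] <;> exact hfv ▸ hf.2 v hv
    · simpa [twist, hs.2.2 v ⟨hfv, hvP⟩] using hf.2 v hv
  · rcases twist_eq_or_eq_neg s f v with h | h <;> rw [h]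
    · exact hf.2 v hv
    · rw [hsymκ v hvS]; exact ⟨f v, hf.2 v hv, rfl⟩

include hup hposκ in
lemma signBit_mem_signSpace (hh : h ∈ HomSet D B κ) (hhf : (fun v => |h v|) = f) :
    signBit h ∈ signSpace D Bpos (support f) := by
  have hsupp : support f = support h := by subst hhf; ext v; simp
  rw [hsupp]
  refine ⟨fun v hv => signBit_eq_zero_of_notMem_support fun h' => hv (hh.1.support_subset h'),
    fun u hu v hv huv => ?_, fun v ⟨hv, hvP⟩ => ?_⟩
  · simp [signBit, hh.1.neg_iff_neg_of_adj (hh.1.support_subset hu) (hh.1.support_subset hv)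
      huv hu hv]
  · have : 0 ≤ h v := hposκ v hvP (hh.2 v (hup ▸ Or.inl hvP))
    simp [signBit, not_lt.mpr this]

include hup hposκ hsymκ in
noncomputable def signSpaceEquiv (hf : f ∈ HomSet D B κ) (hf0 : 0 ≤ f) :
    signSpace D Bpos (support f) ≃
      {h ∈ HomSet D B κ | (fun v => |h v|) = f} ×
        {t : V → ZMod 2 // ∀ v ∉ D \ support f, t v = 0} where
  toFun s := (⟨twist s f, twist_mem_homSet hup hsymκ hf s.2, abs_twist hf0⟩,
    ⟨(D \ support f).indicator s, fun _ hv => Set.indicator_of_notMem hv _⟩)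
  invFun p := ⟨signBit p.1 + p.2, add_mem (signBit_mem_signSpace hup hposκ p.1.2.1 p.1.2.2)
    (mem_signSpace_of_vanishing_off_diff p.2.2)⟩
  left_inv s := by
    ext v
    by_cases hv : v ∈ support f
    · simp [signBit_twist hf0 hv, hv]
    · have : signBit (twist s f) v = 0 := signBit_eq_zero_of_notMem_support (by
        simp [twist, notMem_support.mp hv])
      by_cases hvD : v ∈ D
      · simp [this, hv, hvD]
      · simp [this, hvD, s.2.1 v hvD]
  right_inv := by
    rintro ⟨⟨h, hh, hhf⟩, t, ht⟩
    refine Prod.ext (Subtype.ext ?_) (Subtype.ext ?_)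
    · refine (twist_congr fun v hv => ?_).trans (twist_signBit hhf)
      simp [ht v (·.2 hv)]
    · ext v
      by_cases hv : v ∈ D \ support f
      · have : v ∉ support h := by subst hhf; simpa using hv.2
        simp [hv, signBit_eq_zero_of_notMem_support this]
      · simp [hv, ht v hv]

include hup hposκ hsymκ in
lemma card_signSpace (hD : D.Finite) (hf : f ∈ HomSet D B κ) (hf0 : 0 ≤ f) :
    Nat.card (signSpace D Bpos (support f)) =
      Nat.card {h ∈ HomSet D B κ | (fun v => |h v|) = f} * 2 ^ Nat.card ↥(D \ support f) := by
  rw [Nat.card_congr (signSpaceEquiv hup hposκ hsymκ hf hf0), Nat.card_prod,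
    Nat.card_funVanishingOff (hD.subset Set.sdiff_subset), Nat.card_zmod]

include hup hposκ hsymκ in
theorem card_absFiber_mul_le (hD : D.Finite) (hf : f ∈ HomSet D B κ) (hf0 : 0 ≤ f)
    (hg : g ∈ HomSet D B κ) (hg0 : 0 ≤ g) :
    Nat.card {h ∈ HomSet D B κ | (fun v => |h v|) = f} *
        Nat.card {h ∈ HomSet D B κ | (fun v => |h v|) = g} ≤
      Nat.card {h ∈ HomSet D B κ | (fun v => |h v|) = f ⊓ g} *
        Nat.card {h ∈ HomSet D B κ | (fun v => |h v|) = f ⊔ g} := by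
  have := finite_signSpace (P := Bpos) (X := support f) hD
  have := finite_signSpace (P := Bpos) (X := support g) hD
  have := finite_signSpace (P := Bpos) (X := support f ∩ support g) hD
  have := finite_signSpace (P := Bpos) (X := support f ∪ support g) hD
  have hspaces := Submodule.card_mul_card_le_card_mul_card (p := signSpace D Bpos (support f))
    (q := signSpace D Bpos (support g))
    (sup_le (signSpace_anti Set.inter_subset_left) (signSpace_anti Set.inter_subset_right))
    (inf_signSpace_le_union fun u hu v hv huv => hf.1.ne_zero_or_ne_zero_of_adj hg.1 huv hu hv)
  have hinf := card_signSpace hup hposκ hsymκ hD (inf_mem_homSet hf hg) (le_inf hf0 hg0)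
  have hsup := card_signSpace hup hposκ hsymκ hD (sup_mem_homSet hf hg) (le_sup_of_le_left hf0)
  rw [support_inf_of_nonneg hf0 hg0] at hinf
  rw [support_sup_of_nonneg hf0 hg0] at hsup
  rw [card_signSpace hup hposκ hsymκ hD hf hf0, card_signSpace hup hposκ hsymκ hD hg hg0, hinf,
    hsup] at hspaces
  have hfree : Nat.card ↥(D \ support f) + Nat.card ↥(D \ support g) =
      Nat.card ↥(D \ (support f ∩ support g)) + Nat.card ↥(D \ (support f ∪ support g)) := by
    simp only [Nat.card_coe_set_eq, Set.sdiff_inter, ← Set.sdiff_inter_sdiff]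
    exact (Set.ncard_union_add_ncard_inter _ _ (hD.subset Set.sdiff_subset)
      (hD.subset Set.sdiff_subset)).symm
  refine le_of_mul_le_mul_right (a := 2 ^ (Nat.card ↥(D \ support f) +
    Nat.card ↥(D \ support g))) ?_ (by positivity)
  calc _ = _ := by ring
    _ ≤ _ := hspaces
    _ = _ := by rw [hfree]; ring

end Fibers

lemma IncreasingOn.monotone {D : Set V} {F : (V → ℤ) → ℝ} (hF : IncreasingOn D F) : Monotone F :=
  fun _ _ hle => hF _ _ fun v _ => hle v

theorem fkg_abs_general (D : Set V) (hD : D.Finite) (B : Set V)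
    (κ : V → Set ℤ) (Bpos Bsym : Set V)
    (hup : Bpos ∪ Bsym = B)
    (hposκ : ∀ v ∈ Bpos, κ v ⊆ {x : ℤ | 0 ≤ x})
    (hsymκ : ∀ v ∈ Bsym, κ v = (fun x : ℤ => -x) '' κ v)
    (hfin : (HomSet D B κ).Finite)
    (F G : (V → ℤ) → ℝ) (hF : IncreasingOn D F) (hG : IncreasingOn D G) :
    expec (HomSet D B κ) (fun h => F fun v => |h v|) *
        expec (HomSet D B κ) (fun h => G fun v => |h v|) ≤
      expec (HomSet D B κ) (fun h => (F fun v => |h v|) * (G fun v => |h v|)) := by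
  refine fkg_expec_comp hfin (fun h v => |h v|) ?_ ?_ hF.monotone hG.monotone <;>
    rw [image_abs_homSet hup hposκ hsymκ]
  · exact isSublattice_nonneg_homSet
  · rintro f ⟨hf, hf0⟩ g ⟨hg, hg0⟩
    exact card_absFiber_mul_le hup hposκ hsymκ hD hf hf0 hg hg0

/-- The FKG inequality for `|h|`. -/
theorem fkg_abs (D : Set V) (hD : D.Finite) (B : Set V) (hB : B ⊆ D)
    (κ : V → Set ℤ) (Bpos Bsym : Set V)
    (hup : Bpos ∪ Bsym = B) (hdis : Disjoint Bpos Bsym)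
    (hposκ : ∀ v ∈ Bpos, κ v ⊆ {x : ℤ | 0 ≤ x})
    (hsymκ : ∀ v ∈ Bsym, κ v = (fun x : ℤ => -x) '' κ v)
    (hint : ∀ v ∈ B, ({x ∈ κ v | 0 ≤ x}).OrdConnected)
    (hne : (HomSet D B κ).Nonempty) (hfin : (HomSet D B κ).Finite)
    (F G : (V → ℤ) → ℝ) (hF : IncreasingOn D F) (hG : IncreasingOn D G) :
    expec (HomSet D B κ) (fun h => F fun v => |h v|) *
        expec (HomSet D B κ) (fun h => G fun v => |h v|) ≤
      expec (HomSet D B κ) (fun h => (F fun v => |h v|) * (G fun v => |h v|)) :=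
  fkg_abs_general D hD B κ Bpos Bsym hup hposκ hsymκ hfin F G hF hG

end SquareIce
end

section
/- (Duality of crossings, III.) Let (D,a,b,c,d) be a quad, k ∈ ℤ, and let (∂D,κ) be an admissible boundary condition with κ_v ⊆ [k,∞) for every v ∈ [ab] ∪ [cd] and κ_v ⊆ (−∞,k] for every v ∈ [bc] ∪ [da]. Then for every integer m ≥ max(k,1) and every h ∈ Hom(D,∂D,κ): there is a nearest-neighbour path of vertices of D with all heights of absolute value ≥ m connecting [ab] to [cd] if and only if there is a nearest-neighbour path connecting [ab] to [cd] with all heights ≥ m or one with all heights ≤ −m. -/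
open scoped BigOperators

namespace SquareIce

/-- Along an `adj`-chain inside `D` on which `|h| ≥ m ≥ 1`, the sign of `h`
cannot change. -/
private lemma chain_sign (D : Set V) (h : V → ℤ)
    (hstep : ∀ u v, u ∈ D → v ∈ D → adj u v → |h u - h v| = 1)
    (m s : ℤ) (hm1 : 1 ≤ m) (hs : s = 1 ∨ s = -1) :
    ∀ p : List V, List.Chain' adj p →
      (∀ v ∈ p, v ∈ D ∧ m ≤ |h v|) →
      ∀ a ∈ p.head?, m ≤ s * h a → ∀ v ∈ p, m ≤ s * h v := by
  intro p
  induction p with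
  | nil => intro _ _ a ha; simp at ha
  | cons x t ih =>
    intro hc hmem a ha h0 v hv
    simp only [List.head?_cons, Option.mem_def, Option.some.injEq] at ha
    subst ha
    rcases List.mem_cons.mp hv with rfl | hv
    · exact h0
    · cases t with
      | nil => simp at hv
      | cons y t' =>
        have hadj : adj x y := List.isChain_cons_cons.mp hc |>.1
        have hx := hmem x (by simp)
        have hy := hmem y (by simp)
        have hd := hstep x y hx.1 hy.1 hadj
        have hny : m ≤ s * h y := by
          have habs := hy.2
          rcases abs_cases (h x - h y) with ⟨e1, _⟩ | ⟨e1, _⟩ <;>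
          rcases abs_cases (h y) with ⟨e2, _⟩ | ⟨e2, _⟩ <;>
          rcases hs with rfl | rfl <;> omega
        exact ih (List.isChain_cons_cons.mp hc).2
          (fun v hv => hmem v (List.mem_cons_of_mem _ hv)) y rfl hny v hv

/-- Duality of crossings, III. -/
theorem duality_III (q : Quad) (k : ℤ) (κ : V → Set ℤ)
    (hne : (HomSet q.D (bdry q.D) κ).Nonempty)
    (hfin : (HomSet q.D (bdry q.D) κ).Finite)
    (hκ1 : ∀ v ∈ q.arcAB ∪ q.arcCD, κ v ⊆ {x : ℤ | k ≤ x})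
    (hκ2 : ∀ v ∈ q.arcBC ∪ q.arcDA, κ v ⊆ {x : ℤ | x ≤ k})
    (m : ℤ) (hm : max k 1 ≤ m) (h : V → ℤ) (hh : h ∈ HomSet q.D (bdry q.D) κ) :
    Connected adj {v | v ∈ q.D ∧ m ≤ |h v|} q.arcAB q.arcCD ↔
      (Connected adj {v | v ∈ q.D ∧ m ≤ h v} q.arcAB q.arcCD ∨
        Connected adj {v | v ∈ q.D ∧ h v ≤ -m} q.arcAB q.arcCD) := by
  obtain ⟨⟨hstep, _, _⟩, _⟩ := hh
  have hm1 : (1 : ℤ) ≤ m := le_trans (le_max_right k 1) hm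
  constructor
  · rintro ⟨p, hp, hchain, hmem, hhead, hlast⟩
    have hmem' : ∀ v ∈ p, v ∈ q.D ∧ m ≤ |h v| := fun v hv => hmem v hv
    have hheadmem := hmem' _ (List.head_mem hp)
    have hh? : p.head hp ∈ p.head? := by
      cases p with
      | nil => exact absurd rfl hp
      | cons x t => simp
    rcases abs_cases (h (p.head hp)) with ⟨e, _⟩ | ⟨e, _⟩
    · left
      refine ⟨p, hp, hchain, fun v hv => ⟨(hmem' v hv).1, ?_⟩, hhead, hlast⟩
      have := chain_sign q.D h hstep m 1 hm1 (Or.inl rfl) p hchain hmem'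
        (p.head hp) hh? (by simpa using (e ▸ hheadmem.2 : m ≤ h (p.head hp))) v hv
      simpa using this
    · right
      refine ⟨p, hp, hchain, fun v hv => ⟨(hmem' v hv).1, ?_⟩, hhead, hlast⟩
      have h0 : m ≤ (-1) * h (p.head hp) := by
        have := hheadmem.2; omega
      have := chain_sign q.D h hstep m (-1) hm1 (Or.inr rfl) p hchain hmem'
        (p.head hp) hh? h0 v hv
      omega
  · rintro (⟨p, hp, hc, hmem, h1, h2⟩ | ⟨p, hp, hc, hmem, h1, h2⟩) <;>
      refine ⟨p, hp, hc, fun v hv => ⟨(hmem v hv).1, ?_⟩, h1, h2⟩ <;>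
      · have := (hmem v hv).2
        rcases abs_cases (h v) with ⟨e, _⟩ | ⟨e, _⟩ <;> omega

end SquareIce
end
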